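/- (Sparsity requirement for decoding, block fading.) Let K ≥ 4, T ≥ 1, let H_ij = I_T ⊗ diag(h_ij^{(1)},…,h_ij^{(L)}) ∈ ℝ^{TL×TL} (1 ≤ i,j ≤ K) be invertible, and let ε ∈ ℝ and D be an integer with D = (1−ε)TL/2. If subspaces V_1,…,V_K ⊆ ℝ^{TL} with dim V_i = D for all i satisfy the decoding condition at every receiver, then for every i ∈ {1,…,K} and every N ∈ {1,…,D}, the block N-sparsity satisfies sp^{(T)}_N(V_i) ≥ 2N − εTL. -/

import Mathlib

open Matrix Submodule Module

/-- The decoding condition in the block fading setting (ambient space `ℝ^{T×L}`). -/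
def DecCondB {K T L : ℕ} (H : Fin K → Fin K → Matrix (Fin T × Fin L) (Fin T × Fin L) ℝ)
    (V : Fin K → Submodule ℝ (Fin T × Fin L → ℝ)) : Prop :=
  ∀ i, (V i).map (Matrix.toLin' (H i i)) ⊓
      (⨆ j, ⨆ _ : j ≠ i, (V j).map (Matrix.toLin' (H i j))) = ⊥

/-- `sp^{(T)}(V) = ∑_{k=1}^L dim(P_k V)`, where `P_k` projects onto the entries of the
`k`-th coherence period. -/
noncomputable def spT (T L : ℕ) (V : Submodule ℝ (Fin T × Fin L → ℝ)) : ℕ :=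
  ∑ k : Fin L, finrank ℝ ↥(V.map (LinearMap.funLeft ℝ ℝ (fun s : Fin T => (s, k))))

open Matrix Submodule Module

namespace Stmt11Aux

variable {T L : ℕ}

/-- projection onto block k -/
noncomputable abbrev Pk (T : ℕ) {L : ℕ} (k : Fin L) :
    (Fin T × Fin L → ℝ) →ₗ[ℝ] (Fin T → ℝ) :=
  LinearMap.funLeft ℝ ℝ (fun s : Fin T => (s, k))

/-- block-scalar diagonal equivalence -/
noncomputable def dE (g : Fin L → ℝ) (hg : ∀ k, g k ≠ 0) :
    (Fin T × Fin L → ℝ) ≃ₗ[ℝ] (Fin T × Fin L → ℝ) :=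
  LinearEquiv.piCongrRight fun p => LinearEquiv.smulOfNeZero ℝ ℝ (g p.2) (hg p.2)

lemma dE_apply (g : Fin L → ℝ) (hg : ∀ k, g k ≠ 0) (x : Fin T × Fin L → ℝ)
    (p : Fin T × Fin L) : dE g hg x p = g p.2 * x p := rfl

lemma toLin'_diag (g : Fin L → ℝ) (hg : ∀ k, g k ≠ 0) :
    Matrix.toLin' (Matrix.diagonal (fun p : Fin T × Fin L => g p.2)) =
      (dE (T := T) g hg).toLinearMap := by
  apply LinearMap.ext; intro x; funext p
  simp [Matrix.toLin'_apply, Matrix.mulVec_diagonal, dE_apply]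

lemma dE_comp (g g' : Fin L → ℝ) (hg : ∀ k, g k ≠ 0) (hg' : ∀ k, g' k ≠ 0)
    (W : Submodule ℝ (Fin T × Fin L → ℝ)) :
    (W.map (dE g' hg').toLinearMap).map (dE g hg).toLinearMap =
      W.map (dE (fun k => g k * g' k) (fun k => mul_ne_zero (hg k) (hg' k))).toLinearMap := by
  rw [← Submodule.map_comp]
  congr 1
  apply LinearMap.ext; intro x; funext p
  simp [dE_apply, mul_assoc]

lemma Pk_map_dE (g : Fin L → ℝ) (hg : ∀ k, g k ≠ 0)
    (W : Submodule ℝ (Fin T × Fin L → ℝ)) (k : Fin L) :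
    (W.map (dE g hg).toLinearMap).map (Pk T k) = W.map (Pk T k) := by
  rw [← Submodule.map_comp]
  have : (Pk T k).comp (dE g hg).toLinearMap = (g k) • (Pk T k) := by
    apply LinearMap.ext; intro x; funext s
    simp [Pk, dE_apply, LinearMap.funLeft]
  rw [this, Submodule.map_smul _ _ _ (hg k)]

lemma finrank_le_sum_Pk (U : Submodule ℝ (Fin T × Fin L → ℝ)) :
    finrank ℝ U ≤ ∑ k : Fin L, finrank ℝ (U.map (Pk T k)) := by
  classical
  have hfd : ∀ k : Fin L, FiniteDimensional ℝ (U.map (Pk T k)) := fun k => inferInstance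
  set f : U →ₗ[ℝ] (Π k : Fin L, U.map (Pk T k)) :=
    LinearMap.pi (fun k => ((Pk T k).comp U.subtype).codRestrict (U.map (Pk T k))
      (fun x => ⟨x.1, x.2, rfl⟩)) with hf
  have hinj : Function.Injective f := by
    intro x y hxy
    apply Subtype.ext; funext p
    have := congrFun hxy p.2
    have h2 := congrArg Subtype.val this
    have h3 := congrFun h2 p.1
    exact h3
  calc finrank ℝ U ≤ finrank ℝ (Π k : Fin L, U.map (Pk T k)) :=
        LinearMap.finrank_le_finrank_of_injective hinj
    _ = ∑ k : Fin L, finrank ℝ (U.map (Pk T k)) := Module.finrank_pi_fintype ℝ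

lemma dE_congr {g g' : Fin L → ℝ} (hgg : g = g') (hg : ∀ k, g k ≠ 0) (hg' : ∀ k, g' k ≠ 0) :
    (dE (T := T) g hg).toLinearMap = (dE g' hg').toLinearMap := by
  subst hgg; rfl

end Stmt11Aux

open Stmt11Aux

/-- Sparsity requirement for decoding (block fading): if `D = (1−ε)TL/2` and `V_1,…,V_K`
(of dimension `D`) satisfy the decoding condition at every receiver, then for every `i`
and every `N ∈ {1,…,D}` the block `N`-sparsity satisfies `sp^{(T)}_N(V_i) ≥ 2N − εTL`;
i.e. every subspace `W ≤ V_i` with `dim W ≥ N` has `sp^{(T)}(W) ≥ 2N − εTL`. -/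
theorem stmt11 (K T L : ℕ) (hK : 4 ≤ K) (hT : 1 ≤ T) (h : Fin K → Fin K → Fin L → ℝ)
    (hnz : ∀ i j ℓ, h i j ℓ ≠ 0) (ε : ℝ) (D : ℕ)
    (hD : (D : ℝ) = (1 - ε) * ((T : ℝ) * L) / 2)
    (V : Fin K → Submodule ℝ (Fin T × Fin L → ℝ)) (hdim : ∀ i, finrank ℝ ↥(V i) = D)
    (hdec : DecCondB (fun i j => Matrix.diagonal (fun p : Fin T × Fin L => h i j p.2)) V) :
    ∀ i, ∀ N : ℕ, 1 ≤ N → N ≤ D → ∀ W : Submodule ℝ (Fin T × Fin L → ℝ),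
      W ≤ V i → N ≤ finrank ℝ ↥W → (2 * N - ε * ((T : ℝ) * L) : ℝ) ≤ spT T L W := by
  classical
  intro i N hN1 hND W hWV hNW
  -- rewrite the decoding condition in terms of `dE`
  have key : ∀ r s : Fin K,
      Matrix.toLin' (Matrix.diagonal (fun p : Fin T × Fin L => h r s p.2)) =
        (dE (h r s) (hnz r s)).toLinearMap := fun r s => toLin'_diag _ _
  have hdec' : ∀ r, (V r).map (dE (h r r) (hnz r r)).toLinearMap ⊓
      (⨆ j, ⨆ _ : j ≠ r, (V j).map (dE (h r j) (hnz r j)).toLinearMap) = ⊥ := by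
    intro r
    have := hdec r
    simpa only [key] using this
  -- pick two users a b distinct from i and from each other
  obtain ⟨a, ha, b, hb, hab⟩ :
      ∃ a ∈ Finset.univ.erase i, ∃ b ∈ Finset.univ.erase i, a ≠ b := by
    apply Finset.one_lt_card.mp
    have hcard : (Finset.univ.erase i).card = K - 1 := by
      rw [Finset.card_erase_of_mem (Finset.mem_univ i), Finset.card_univ, Fintype.card_fin]
    omega
  have hia : i ≠ a := (Finset.ne_of_mem_erase ha).symm
  have hib : i ≠ b := (Finset.ne_of_mem_erase hb).symm
  -- the relevant subspaces
  set X : Submodule ℝ (Fin T × Fin L → ℝ) := W.map (dE (h a i) (hnz a i)).toLinearMap with hX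
  set Y : Submodule ℝ (Fin T × Fin L → ℝ) := (V b).map (dE (h a b) (hnz a b)).toLinearMap with hY
  set Z : Submodule ℝ (Fin T × Fin L → ℝ) := (V a).map (dE (h a a) (hnz a a)).toLinearMap with hZ
  set M : Submodule ℝ (Fin T × Fin L → ℝ) := X ⊓ Y with hM
  set Xt : Submodule ℝ (Fin T × Fin L → ℝ) := W.map (dE (h b i) (hnz b i)).toLinearMap with hXt
  have hg2 : ∀ k, h b b k * (h a b k)⁻¹ ≠ 0 :=
    fun k => mul_ne_zero (hnz b b k) (inv_ne_zero (hnz a b k))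
  set M2 : Submodule ℝ (Fin T × Fin L → ℝ) :=
    M.map (dE (fun k => h b b k * (h a b k)⁻¹) hg2).toLinearMap with hM2
  -- ranks
  have hrX : finrank ℝ ↥X = finrank ℝ ↥W := LinearEquiv.finrank_map_eq _ _
  have hrY : finrank ℝ ↥Y = D := by rw [hY, LinearEquiv.finrank_map_eq, hdim]
  have hrZ : finrank ℝ ↥Z = D := by rw [hZ, LinearEquiv.finrank_map_eq, hdim]
  have hrXt : finrank ℝ ↥Xt = finrank ℝ ↥W := LinearEquiv.finrank_map_eq _ _
  have hrM2 : finrank ℝ ↥M2 = finrank ℝ ↥M := LinearEquiv.finrank_map_eq _ _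
  -- ambient rank
  have hamb : finrank ℝ (Fin T × Fin L → ℝ) = T * L := by
    rw [Module.finrank_fintype_fun_eq_card, Fintype.card_prod, Fintype.card_fin, Fintype.card_fin]
  -- Step 1:  Z ⊓ (X ⊔ Y) = ⊥
  have hZdisj : Z ⊓ (X ⊔ Y) = ⊥ := by
    have hle : X ⊔ Y ≤ ⨆ j, ⨆ _ : j ≠ a, (V j).map (dE (h a j) (hnz a j)).toLinearMap := by
      apply sup_le
      · exact le_trans (Submodule.map_mono hWV)
          (le_iSup_of_le i (le_iSup_of_le hia le_rfl))
      · exact le_iSup_of_le b (le_iSup_of_le hab.symm le_rfl)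
    exact le_bot_iff.mp (le_trans (inf_le_inf_left Z hle) (hdec' a).le)
  have ineq1 : D + finrank ℝ ↥(X ⊔ Y) ≤ T * L := by
    have h1 := Submodule.finrank_sup_add_finrank_inf_eq Z (X ⊔ Y)
    rw [hZdisj, finrank_bot, add_zero, hrZ] at h1
    calc D + finrank ℝ ↥(X ⊔ Y) = finrank ℝ ↥(Z ⊔ (X ⊔ Y)) := h1.symm
      _ ≤ finrank ℝ (Fin T × Fin L → ℝ) := Submodule.finrank_le _
      _ = T * L := hamb
  have ineq2 : finrank ℝ ↥(X ⊔ Y) + finrank ℝ ↥M = finrank ℝ ↥W + D := by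
    rw [hM, Submodule.finrank_sup_add_finrank_inf_eq, hrX, hrY]
  -- Step 2: M2 sits inside the desired signal space of receiver b
  have hM2Vb : M2 ≤ (V b).map (dE (h b b) (hnz b b)).toLinearMap := by
    have h1 : M2 ≤ Y.map (dE (fun k => h b b k * (h a b k)⁻¹) hg2).toLinearMap :=
      Submodule.map_mono inf_le_right
    have h2 : Y.map (dE (fun k => h b b k * (h a b k)⁻¹) hg2).toLinearMap =
        (V b).map (dE (h b b) (hnz b b)).toLinearMap := by
      rw [hY, dE_comp]
      congr 1
      have hfun : (fun k => (h b b k * (h a b k)⁻¹) * h a b k) = h b b := by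
        funext k
        exact inv_mul_cancel_right₀ (hnz a b k) _
      exact dE_congr hfun _ _
    exact h2 ▸ h1
  have hXtVi : Xt ≤ (V i).map (dE (h b i) (hnz b i)).toLinearMap := Submodule.map_mono hWV
  have hdisj2 : Xt ⊓ M2 = ⊥ := by
    have hle : Xt ≤ ⨆ j, ⨆ _ : j ≠ b, (V j).map (dE (h b j) (hnz b j)).toLinearMap :=
      le_trans hXtVi (le_iSup_of_le i (le_iSup_of_le hib le_rfl))
    have : Xt ⊓ M2 ≤ ((V b).map (dE (h b b) (hnz b b)).toLinearMap) ⊓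
        (⨆ j, ⨆ _ : j ≠ b, (V j).map (dE (h b j) (hnz b j)).toLinearMap) := by
      rw [inf_comm]
      exact inf_le_inf hM2Vb hle
    exact le_bot_iff.mp (le_trans this (hdec' b).le)
  have ineq3 : finrank ℝ ↥W + finrank ℝ ↥M = finrank ℝ ↥(Xt ⊔ M2) := by
    have h1 := Submodule.finrank_sup_add_finrank_inf_eq Xt M2
    rw [hdisj2, finrank_bot, add_zero, hrXt, hrM2] at h1
    exact h1.symm
  -- Step 3: block bound
  have ineq4 : finrank ℝ ↥(Xt ⊔ M2) ≤ spT T L W := by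
    calc finrank ℝ ↥(Xt ⊔ M2) ≤ ∑ k : Fin L, finrank ℝ ↥((Xt ⊔ M2).map (Pk T k)) :=
          finrank_le_sum_Pk _
      _ ≤ ∑ k : Fin L, finrank ℝ ↥(W.map (Pk T k)) := by
          apply Finset.sum_le_sum
          intro k _
          apply Submodule.finrank_mono
          rw [Submodule.map_sup]
          apply sup_le
          · rw [hXt, Pk_map_dE]
          · rw [hM2, Pk_map_dE]
            calc M.map (Pk T k) ≤ X.map (Pk T k) := Submodule.map_mono inf_le_left
              _ = W.map (Pk T k) := by rw [hX, Pk_map_dE]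
      _ = spT T L W := rfl
  -- arithmetic conclusion
  have c1 : (D : ℝ) + finrank ℝ ↥(X ⊔ Y) ≤ (T : ℝ) * L := by exact_mod_cast ineq1
  have c2 : (finrank ℝ ↥(X ⊔ Y) : ℝ) + finrank ℝ ↥M = finrank ℝ ↥W + D := by exact_mod_cast ineq2
  have c3 : (finrank ℝ ↥W : ℝ) + finrank ℝ ↥M ≤ spT T L W := by
    exact_mod_cast ineq3 ▸ ineq4
  have c4 : (N : ℝ) ≤ finrank ℝ ↥W := by exact_mod_cast hNW
  linarith
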